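/- arXiv:2203.12361 — 7 statements merged into one kernel-verified Lean document; each statement's English description precedes it below -/
import Mathlib

section
/- Let z be a real number with z ≥ 3 and let t ≥ 1 be a natural number. Then (2(z−1)^(t+1) − 2)/(z−2) + (∑_{i=1}^{t} (z−1)·z^(t−i)·(2(z−1)^i − 2)/(z−2)) + 2(z−1)^t·(t+2) + (∑_{j=2}^{t+1} 2(z−1)^(j−2)·z^(t−j+1)·j) = 2·((2z+1)·z^t − 2·(z−1)^(t+1)). -/
/-!
Both sums over levels satisfy `S (t + 1) = z * S t + (new term)`, because every weight
`z ^ (t - i)` gains one factor `z` when `t` grows. Induction on `t` then gives the totals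
`2 (z ^ (t + 1) - (z - 1) ^ (t + 1))` for the hub degrees and
`2 (z ^ (t + 1) + z ^ t - (z - 1) ^ (t + 1))` for the bottom degrees, which add up to `2 E_t`.
-/

open Finset

theorem sum_Icc_mul_pow_sub_mul_succ_top {R : Type*} [CommSemiring R] (f g : ℕ → R) (x : R)
    {m n : ℕ} (h : m ≤ n + 1) :
    ∑ i ∈ Icc m (n + 1), f i * x ^ (n + 1 - i) * g i
      = x * ∑ i ∈ Icc m n, f i * x ^ (n - i) * g i + f (n + 1) * g (n + 1) := by
  rw [sum_Icc_succ_top h, mul_sum, Nat.sub_self, pow_zero, mul_one]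
  congr 1
  refine sum_congr rfl fun i hi => ?_
  rw [Nat.sub_add_comm (mem_Icc.mp hi).2, pow_succ]
  ring

theorem hub_degree_sum {K : Type*} [Field K] (z : K) (hz : z - 2 ≠ 0) (t : ℕ) :
    (2 * (z - 1) ^ (t + 1) - 2) / (z - 2)
      + ∑ i ∈ Icc 1 t, (z - 1) * z ^ (t - i) * ((2 * (z - 1) ^ i - 2) / (z - 2))
      = 2 * (z ^ (t + 1) - (z - 1) ^ (t + 1)) := by
  induction t with
  | zero =>
    rw [Icc_eq_empty (by omega), sum_empty, add_zero, div_eq_iff hz]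
    ring
  | succ t ih =>
    rw [sum_Icc_mul_pow_sub_mul_succ_top _ _ _ (by omega)]
    -- `ring` sees `(z - 2)⁻¹` as an atom, so the cancellation `(z - 2) * (z - 2)⁻¹ = 1` is supplied
    linear_combination z * ih + 2 * (z - 1) ^ (t + 1) * mul_inv_cancel₀ hz

theorem bottom_degree_sum {R : Type*} [CommRing R] (z : R) (t : ℕ) :
    2 * (z - 1) ^ t * ((t : R) + 2)
      + ∑ j ∈ Icc 2 (t + 1), 2 * (z - 1) ^ (j - 2) * z ^ (t + 1 - j) * (j : R)
      = 2 * (z ^ (t + 1) + z ^ t - (z - 1) ^ (t + 1)) := by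
  induction t with
  | zero => norm_num
  | succ t ih =>
    rw [sum_Icc_mul_pow_sub_mul_succ_top _ _ _ (by omega), show t + 1 + 1 - 2 = t by omega]
    push_cast
    linear_combination z * ih

theorem degree_sum_eq_twice_edges_general (z : ℝ) (hz : 3 ≤ z) (t : ℕ) :
    (2 * (z - 1) ^ (t + 1) - 2) / (z - 2)
      + (∑ i ∈ Finset.Icc 1 t, (z - 1) * z ^ (t - i) * ((2 * (z - 1) ^ i - 2) / (z - 2)))
      + 2 * (z - 1) ^ t * ((t : ℝ) + 2)
      + (∑ j ∈ Finset.Icc 2 (t + 1), 2 * (z - 1) ^ (j - 2) * z ^ (t + 1 - j) * (j : ℝ))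
      = 2 * ((2 * z + 1) * z ^ t - 2 * (z - 1) ^ (t + 1)) := by
  have hub := hub_degree_sum z (by linarith) t
  have bottom := bottom_degree_sum z t
  linear_combination hub + bottom

theorem degree_sum_eq_twice_edges (z : ℝ) (hz : 3 ≤ z) (t : ℕ) (ht : 1 ≤ t) :
    (2 * (z - 1) ^ (t + 1) - 2) / (z - 2)
      + (∑ i ∈ Finset.Icc 1 t, (z - 1) * z ^ (t - i) * ((2 * (z - 1) ^ i - 2) / (z - 2)))
      + 2 * (z - 1) ^ t * ((t : ℝ) + 2)
      + (∑ j ∈ Finset.Icc 2 (t + 1), 2 * (z - 1) ^ (j - 2) * z ^ (t + 1 - j) * (j : ℝ))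
      = 2 * ((2 * z + 1) * z ^ t - 2 * (z - 1) ^ (t + 1)) :=
  degree_sum_eq_twice_edges_general z hz t
end

section
/- Define C : ℕ → ℝ by C(t) = (1/3^(t+1))·[ 2/((2^(t+2)−2)·(2^(t+2)−3)) + 4·2^t/((t+2)·(t+1)) + ∑_{i=0}^{t−1} 4·3^i/((2^(t−i+1)−2)·(2^(t−i+1)−3)) + ∑_{j=2}^{t+1} 4·2^(j−2)·3^(t−j+1)/(j·(j−1)) ]. Then the sequence C(t) converges as t → ∞, and its limit is positive. -/
/-!
Substituting `k = t - 1 - i` in the first sum and `k = j - 2` in the second, the factor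
`1 / 3 ^ (t + 1)` cancels against the powers of `3` inside: `C t` is the `t`-th partial sum of
`∑ (a k + b k) / 3 ^ (k + 2)` plus the remainder `(a t / 2 + b t) / 3 ^ (t + 1)`, where
`a k = 4 / ((2 ^ (k + 2) - 2) (2 ^ (k + 2) - 3)) ≤ 2` and
`b k = 4 * 2 ^ k / ((k + 2) (k + 1)) ≤ 2 ^ (k + 1)`.
The series is therefore dominated by `(2 / 3) ^ k`, so its terms, and with them the remainder,
tend to `0`, and `C t` tends to the sum of the series, which is positive.
-/

open Finset Filter Topology

lemma one_div_pow_mul_sum_range_pow_sub_mul {K : Type*} [Field K] {r : K} (hr : r ≠ 0)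
    (h : ℕ → K) (t : ℕ) :
    1 / r ^ (t + 1) * ∑ k ∈ range t, r ^ (t - 1 - k) * h k
      = ∑ k ∈ range t, h k / r ^ (k + 2) := by
  rw [mul_sum]
  refine sum_congr rfl fun k hk => ?_
  have hpow : r ^ (t + 1) = r ^ (t - 1 - k) * r ^ (k + 2) := by
    rw [← pow_add]
    congr 1
    have := mem_range.mp hk
    omega
  rw [hpow]
  field_simp

noncomputable def clusteringCoeff (t : ℕ) : ℝ :=
  (1 / 3 ^ (t + 1) : ℝ) *
    (2 / ((2 ^ (t + 2) - 2) * (2 ^ (t + 2) - 3))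
      + 4 * 2 ^ t / (((t : ℝ) + 2) * ((t : ℝ) + 1))
      + ∑ i ∈ Finset.range t,
          4 * 3 ^ i / ((2 ^ (t - i + 1) - 2) * (2 ^ (t - i + 1) - 3))
      + ∑ j ∈ Finset.Icc 2 (t + 1),
          4 * 2 ^ (j - 2) * 3 ^ (t + 1 - j) / ((j : ℝ) * ((j : ℝ) - 1)))

/- The two families of summands come from nodes of degree `d = 2 ^ (k + 2) - 2` and `d = k + 2`,
whose clustering coefficients have the form `2 e / (d (d - 1))`. -/

noncomputable def hubWeight (k : ℕ) : ℝ :=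
  4 / ((2 ^ (k + 2) - 2) * (2 ^ (k + 2) - 3))

noncomputable def smallDegreeWeight (k : ℕ) : ℝ :=
  4 * 2 ^ k / (((k : ℝ) + 2) * ((k : ℝ) + 1))

noncomputable def clusteringSeriesTerm (k : ℕ) : ℝ :=
  (hubWeight k + smallDegreeWeight k) / 3 ^ (k + 2)

lemma four_le_two_pow_add_two (k : ℕ) : (4 : ℝ) ≤ 2 ^ (k + 2) :=
  calc (4 : ℝ) = 2 ^ 2 := by norm_num
    _ ≤ 2 ^ (k + 2) := pow_le_pow_right₀ (by norm_num) (by omega)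

lemma hubWeight_nonneg (k : ℕ) : 0 ≤ hubWeight k := by
  have := four_le_two_pow_add_two k
  unfold hubWeight
  apply div_nonneg <;> nlinarith

lemma hubWeight_le_two (k : ℕ) : hubWeight k ≤ 2 := by
  have := four_le_two_pow_add_two k
  unfold hubWeight
  rw [div_le_iff₀ (by nlinarith)]
  nlinarith

lemma smallDegreeWeight_pos (k : ℕ) : 0 < smallDegreeWeight k := by
  unfold smallDegreeWeight
  positivity

lemma smallDegreeWeight_le (k : ℕ) : smallDegreeWeight k ≤ 2 * 2 ^ k := by
  have hk : (0 : ℝ) ≤ k := k.cast_nonneg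
  unfold smallDegreeWeight
  have hprod : 2 ≤ ((k : ℝ) + 2) * ((k : ℝ) + 1) := by nlinarith
  rw [div_le_iff₀ (by positivity)]
  nlinarith [mul_le_mul_of_nonneg_left hprod (pow_pos (two_pos : (0 : ℝ) < 2) k).le]

lemma clusteringSeriesTerm_nonneg (k : ℕ) : 0 ≤ clusteringSeriesTerm k :=
  div_nonneg (add_nonneg (hubWeight_nonneg k) (smallDegreeWeight_pos k).le) (by positivity)

lemma clusteringSeriesTerm_le (k : ℕ) : clusteringSeriesTerm k ≤ (2 / 3) ^ k := by
  have h2 : (1 : ℝ) ≤ 2 ^ k := one_le_pow₀ (by norm_num)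
  have hnum : hubWeight k + smallDegreeWeight k ≤ 9 * 2 ^ k := by
    linarith [hubWeight_le_two k, smallDegreeWeight_le k]
  calc clusteringSeriesTerm k ≤ 9 * 2 ^ k / 3 ^ (k + 2) := by
        unfold clusteringSeriesTerm; gcongr
    _ = (2 / 3) ^ k := by rw [div_pow, pow_add]; ring

lemma summable_clusteringSeriesTerm : Summable clusteringSeriesTerm :=
  .of_nonneg_of_le clusteringSeriesTerm_nonneg clusteringSeriesTerm_le
    (summable_geometric_of_lt_one (by norm_num) (by norm_num))

lemma tsum_clusteringSeriesTerm_pos : 0 < ∑' k, clusteringSeriesTerm k :=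
  summable_clusteringSeriesTerm.tsum_pos clusteringSeriesTerm_nonneg 0 <|
    div_pos (add_pos_of_nonneg_of_pos (hubWeight_nonneg 0) (smallDegreeWeight_pos 0))
      (by positivity)

lemma sum_hub_eq (t : ℕ) :
    ∑ i ∈ range t, 4 * 3 ^ i / ((2 ^ (t - i + 1) - 2) * (2 ^ (t - i + 1) - 3) : ℝ)
      = ∑ k ∈ range t, 3 ^ (t - 1 - k) * hubWeight k := by
  rw [← sum_range_reflect]
  refine sum_congr rfl fun k hk => ?_
  rw [show t - (t - 1 - k) + 1 = k + 2 by have := mem_range.mp hk; omega, hubWeight]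
  ring

lemma sum_smallDegree_eq (t : ℕ) :
    ∑ j ∈ Icc 2 (t + 1), 4 * 2 ^ (j - 2) * 3 ^ (t + 1 - j) / ((j : ℝ) * ((j : ℝ) - 1))
      = ∑ k ∈ range t, 3 ^ (t - 1 - k) * smallDegreeWeight k := by
  rw [← Ico_add_one_right_eq_Icc, sum_Ico_eq_sum_range, show t + 1 + 1 - 2 = t by omega]
  refine sum_congr rfl fun k hk => ?_
  rw [show 2 + k - 2 = k by omega, show t + 1 - (2 + k) = t - 1 - k by omega, smallDegreeWeight]
  push_cast
  ring

lemma clusteringCoeff_eq (t : ℕ) :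
    clusteringCoeff t = ∑ k ∈ range t, clusteringSeriesTerm k
      + (hubWeight t / 2 + smallDegreeWeight t) / 3 ^ (t + 1) := by
  have h3 : (3 : ℝ) ≠ 0 := by norm_num
  have hsum := one_div_pow_mul_sum_range_pow_sub_mul h3
    (fun k => hubWeight k + smallDegreeWeight k) t
  simp only [mul_add, sum_add_distrib] at hsum
  rw [clusteringCoeff, sum_hub_eq, sum_smallDegree_eq]
  simp only [clusteringSeriesTerm, hubWeight, smallDegreeWeight] at hsum ⊢
  rw [← hsum]
  ring

lemma tendsto_clusteringCoeff_remainder :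
    Tendsto (fun t => (hubWeight t / 2 + smallDegreeWeight t) / 3 ^ (t + 1)) atTop (𝓝 0) := by
  have hlim : Tendsto (fun t => 3 * clusteringSeriesTerm t) atTop (𝓝 0) := by
    simpa using summable_clusteringSeriesTerm.tendsto_atTop_zero.const_mul 3
  refine squeeze_zero (fun t => ?_) (fun t => ?_) hlim
  · have := hubWeight_nonneg t
    have := smallDegreeWeight_pos t
    positivity
  · have := hubWeight_nonneg t
    rw [clusteringSeriesTerm, pow_succ _ (t + 1)]
    field_simp
    linarith

theorem clustering_coefficient_converges_pos :
    ∃ L : ℝ, Filter.Tendsto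
      (fun t : ℕ => (1 / 3 ^ (t + 1) : ℝ) *
        (2 / ((2 ^ (t + 2) - 2) * (2 ^ (t + 2) - 3))
          + 4 * 2 ^ t / (((t : ℝ) + 2) * ((t : ℝ) + 1))
          + ∑ i ∈ Finset.range t,
              4 * 3 ^ i / ((2 ^ (t - i + 1) - 2) * (2 ^ (t - i + 1) - 3))
          + ∑ j ∈ Finset.Icc 2 (t + 1),
              4 * 2 ^ (j - 2) * 3 ^ (t + 1 - j) / ((j : ℝ) * ((j : ℝ) - 1))))
      Filter.atTop (nhds L) ∧ 0 < L := by
  change ∃ L, Tendsto clusteringCoeff atTop (𝓝 L) ∧ 0 < L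
  refine ⟨∑' k, clusteringSeriesTerm k, ?_, tsum_clusteringSeriesTerm_pos⟩
  simp only [funext clusteringCoeff_eq]
  simpa using summable_clusteringSeriesTerm.hasSum.tendsto_sum_nat.add
    tendsto_clusteringCoeff_remainder
end

section
/- Let z be a real number with z ≥ 3 and let P, Q : ℕ → ℝ satisfy P(0) = 2, Q(0) = 1, P(t+1) = (z−1)·(Q(t) + 3·z^t) + P(t), and Q(t+1) = P(t) + 3·z^t + (z−1)·Q(t) for all t. Then for every natural number t ≥ 1, P(t) = z^t·(4z² + (6t−8)·z − 6t + 6)/z². -/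
theorem P_closed_form (z : ℝ) (hz : 3 ≤ z) (P Q : ℕ → ℝ)
    (hP0 : P 0 = 2) (hQ0 : Q 0 = 1)
    (hP : ∀ t : ℕ, P (t + 1) = (z - 1) * (Q t + 3 * z ^ t) + P t)
    (hQ : ∀ t : ℕ, Q (t + 1) = P t + 3 * z ^ t + (z - 1) * Q t) :
    ∀ t : ℕ, 1 ≤ t →
      P t = z ^ t * (4 * z ^ 2 + (6 * (t : ℝ) - 8) * z - 6 * (t : ℝ) + 6) / z ^ 2 := by
  have hz0 : z ≠ 0 := by linarith
  have key : ∀ t : ℕ, 1 ≤ t →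
      P t = z ^ t * (4 * z ^ 2 + (6 * (t : ℝ) - 8) * z - 6 * (t : ℝ) + 6) / z ^ 2 ∧
      Q t = z ^ t * (z ^ 2 + (6 * (t : ℝ) - 2) * z - 6 * (t : ℝ) + 6) / z ^ 2 := by
    intro t ht
    induction t, ht using Nat.le_induction with
    | base =>
      constructor
      · rw [hP 0, hP0, hQ0]; push_cast; field_simp; ring
      · rw [hQ 0, hP0, hQ0]; push_cast; field_simp; ring
    | succ n hn ih =>
      obtain ⟨ihP, ihQ⟩ := ih
      constructor
      · rw [hP n, ihP, ihQ]; push_cast; field_simp; ring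
      · rw [hQ n, ihP, ihQ]; push_cast; field_simp; ring
  exact fun t ht => (key t ht).1
end

section
/- Let z be a real number with z ≥ 3 and let P, Q : ℕ → ℝ satisfy P(0) = 2, Q(0) = 1, P(t+1) = (z−1)·(Q(t) + 3·z^t) + P(t), and Q(t+1) = P(t) + 3·z^t + (z−1)·Q(t) for all t. Then for every natural number t ≥ 1, Q(t) = z^t·(z² + (6t−2)·z − 6t + 6)/z². -/
theorem Q_closed_form (z : ℝ) (hz : 3 ≤ z) (P Q : ℕ → ℝ)
    (hP0 : P 0 = 2) (hQ0 : Q 0 = 1)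
    (hP : ∀ t : ℕ, P (t + 1) = (z - 1) * (Q t + 3 * z ^ t) + P t)
    (hQ : ∀ t : ℕ, Q (t + 1) = P t + 3 * z ^ t + (z - 1) * Q t) :
    ∀ t : ℕ, 1 ≤ t →
      Q t = z ^ t * (z ^ 2 + (6 * (t : ℝ) - 2) * z - 6 * (t : ℝ) + 6) / z ^ 2 := by
  have hz0 : z ≠ 0 := by linarith
  have key : ∀ t : ℕ, 1 ≤ t →
      Q t = z ^ t * (z ^ 2 + (6 * (t : ℝ) - 2) * z - 6 * (t : ℝ) + 6) / z ^ 2 ∧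
      P t = z ^ t * (4 * z ^ 2 + (6 * (t : ℝ) - 8) * z - 6 * (t : ℝ) + 6) / z ^ 2 := by
    intro t ht
    induction t, ht using Nat.le_induction with
    | base =>
      constructor
      · rw [hQ 0, hP0, hQ0]
        push_cast
        field_simp
        ring
      · rw [hP 0, hP0, hQ0]
        push_cast
        field_simp
        ring
    | succ n hn ih =>
      obtain ⟨hQn, hPn⟩ := ih
      constructor
      · rw [hQ n, hQn, hPn]
        push_cast
        field_simp
        ring
      · rw [hP n, hQn, hPn]
        push_cast
        field_simp
        ring
  exact fun t ht => (key t ht).1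
end

section
/- Let z be a real number with z ≥ 3 and let t ≥ 1 be a natural number. Then ∑_{i=1}^{t} z^(t−i) · 6·(z−1)·z^(2i)·(2z² + (3i−4)·z − 3i + 3)/z³ = 6·z^t·(2·z^(t+2) + (3t−4)·z^(t+1) − 3t·z^t − 2z² + 4z)/z². -/
theorem weighted_cross_distance_sum (z : ℝ) (hz : 3 ≤ z) (t : ℕ) (ht : 1 ≤ t) :
    ∑ i ∈ Finset.Icc 1 t,
        z ^ (t - i) * (6 * (z - 1) * z ^ (2 * i) *
          (2 * z ^ 2 + (3 * (i : ℝ) - 4) * z - 3 * (i : ℝ) + 3) / z ^ 3)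
      = 6 * z ^ t * (2 * z ^ (t + 2) + (3 * (t : ℝ) - 4) * z ^ (t + 1)
          - 3 * (t : ℝ) * z ^ t - 2 * z ^ 2 + 4 * z) / z ^ 2 := by
  have hz0 : z ≠ 0 := by nlinarith
  induction t with
  | zero => omega
  | succ n ih =>
    rcases Nat.eq_zero_or_pos n with hn | hn
    · subst hn
      simp only [Finset.Icc_self, Finset.sum_singleton]
      push_cast
      field_simp
      ring
    · rw [Finset.sum_Icc_succ_top (by omega)]
      have step : ∀ i ∈ Finset.Icc 1 n,
          z ^ (n + 1 - i) * (6 * (z - 1) * z ^ (2 * i) *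
            (2 * z ^ 2 + (3 * (i : ℝ) - 4) * z - 3 * (i : ℝ) + 3) / z ^ 3)
          = z * (z ^ (n - i) * (6 * (z - 1) * z ^ (2 * i) *
            (2 * z ^ 2 + (3 * (i : ℝ) - 4) * z - 3 * (i : ℝ) + 3) / z ^ 3)) := by
        intro i hi
        simp only [Finset.mem_Icc] at hi
        have : n + 1 - i = (n - i) + 1 := by omega
        rw [this, pow_succ]
        ring
      rw [Finset.sum_congr rfl step, ← Finset.mul_sum, ih hn]
      have hns : n + 1 - (n + 1) = 0 := by omega
      rw [hns]
      push_cast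
      field_simp
      ring
end

section
/- Let z be a real number with z ≥ 3 and let D : ℕ → ℝ satisfy D(0) = 3 and D(t+1) = z·D(t) + 6·(z−1)·z^(2t)·(2z² + (3t−1)·z − 3t)/z for all natural numbers t. Then for every natural number t, D(t) = 3·z^t·(4·z^(t+2) + (6t−8)·z^(t+1) − 6t·z^t − 3z² + 8z)/z². -/
theorem total_distance_closed_form (z : ℝ) (hz : 3 ≤ z) (D : ℕ → ℝ)
    (hD0 : D 0 = 3)
    (hD : ∀ t : ℕ, D (t + 1) = z * D t
      + 6 * (z - 1) * z ^ (2 * t) * (2 * z ^ 2 + (3 * (t : ℝ) - 1) * z - 3 * (t : ℝ)) / z) :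
    ∀ t : ℕ, D t = 3 * z ^ t * (4 * z ^ (t + 2) + (6 * (t : ℝ) - 8) * z ^ (t + 1)
      - 6 * (t : ℝ) * z ^ t - 3 * z ^ 2 + 8 * z) / z ^ 2 := by
  have hz0 : z ≠ 0 := by linarith
  intro t
  induction t with
  | zero => simp [hD0]; field_simp; ring
  | succ n ih =>
    rw [hD n, ih]
    push_cast
    field_simp
    ring
end

section
/- Define D̄ : ℕ → ℝ by D̄(t) = (8·3^t·(t+1) − 2)/(3^(t+2) − 3) and N : ℕ → ℝ by N(t) = 3^(t+1). Then for every natural number t, D̄(t) − 8·log(N(t))/(9·log 3) = (8t+2)/(9·(3^(t+1) − 1)) (where log is the natural logarithm), and consequently the sequence t ↦ D̄(t) − 8·log(N(t))/(9·log 3) converges to 0 as t → ∞. -/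
theorem average_path_length_log_growth
    (Dbar N : ℕ → ℝ)
    (hDbar : ∀ t : ℕ, Dbar t = (8 * 3 ^ t * ((t : ℝ) + 1) - 2) / (3 ^ (t + 2) - 3))
    (hN : ∀ t : ℕ, N t = 3 ^ (t + 1)) :
    (∀ t : ℕ, Dbar t - 8 * Real.log (N t) / (9 * Real.log 3)
        = (8 * (t : ℝ) + 2) / (9 * ((3 : ℝ) ^ (t + 1) - 1))) ∧
      Filter.Tendsto (fun t : ℕ => Dbar t - 8 * Real.log (N t) / (9 * Real.log 3))
        Filter.atTop (nhds 0) := by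
  have key : ∀ t : ℕ, Dbar t - 8 * Real.log (N t) / (9 * Real.log 3)
      = (8 * (t : ℝ) + 2) / (9 * ((3 : ℝ) ^ (t + 1) - 1)) := by
    intro t
    have hlog3 : Real.log 3 ≠ 0 := by
      have := Real.log_pos (by norm_num : (1:ℝ) < 3); linarith
    have hlogN : Real.log (N t) = ((t : ℝ) + 1) * Real.log 3 := by
      rw [hN, ← Real.rpow_natCast, Real.log_rpow (by norm_num)]
      push_cast; ring
    have hpow : (1 : ℝ) < 3 ^ (t + 1) := one_lt_pow₀ (by norm_num) (by omega)
    have hne : (3 : ℝ) ^ (t + 1) - 1 ≠ 0 := by linarith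
    have hden : (3 : ℝ) ^ (t + 2) - 3 = 3 * ((3 : ℝ) ^ (t + 1) - 1) := by
      rw [pow_succ]; ring
    rw [hDbar, hlogN, hden]
    have h3 : (3 : ℝ) ^ (t + 1) = 3 * 3 ^ t := by rw [pow_succ]; ring
    field_simp
    rw [h3]
    ring
  refine ⟨key, ?_⟩
  have hbound : Filter.Tendsto (fun t : ℕ => (8 * (t : ℝ) + 2) * (1/3) ^ t)
      Filter.atTop (nhds 0) := by
    have h1 := (tendsto_self_mul_const_pow_of_lt_one (r := (1/3 : ℝ)) (by norm_num)
      (by norm_num)).const_mul (8 : ℝ)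
    have h2 := (tendsto_pow_atTop_nhds_zero_of_lt_one (r := (1/3 : ℝ)) (by norm_num)
      (by norm_num)).const_mul (2 : ℝ)
    have := h1.add h2
    simp only [mul_zero, add_zero] at this
    convert this using 2 with t
    ring
  have h1 : Filter.Tendsto (fun t : ℕ => (8 * (t : ℝ) + 2) / (9 * ((3 : ℝ) ^ (t + 1) - 1)))
      Filter.atTop (nhds 0) := by
    apply squeeze_zero (fun t => ?_) (fun t => ?_) hbound
    · have hpow : (1 : ℝ) < 3 ^ (t + 1) := one_lt_pow₀ (by norm_num) (by omega)
      have hnum : (0:ℝ) ≤ 8 * t + 2 := by positivity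
      apply div_nonneg hnum (by nlinarith)
    · have hpow : (0 : ℝ) < 3 ^ t := by positivity
      have hpow1 : (1:ℝ) ≤ 3 ^ t := one_le_pow₀ (by norm_num : (1:ℝ) ≤ 3)
      have h31 : (3:ℝ) ^ (t+1) = 3 * 3 ^ t := by rw [pow_succ]; ring
      have hnum : (0:ℝ) ≤ 8 * t + 2 := by positivity
      have h13 : (8 * (t:ℝ) + 2) * (1/3) ^ t = (8 * t + 2) / 3 ^ t := by
        rw [div_pow]; ring
      rw [h13]
      apply div_le_div_of_nonneg_left hnum hpow
      nlinarith
  exact h1.congr fun t => (key t).symm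
end
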